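/- arXiv:1405.0799 — 4 statements merged into one kernel-verified Lean document; each statement's English description precedes it below -/
import Mathlib

section
/- Let A = {a_1, a_2, ..., a_n} be a set of n distinct real numbers with a_1 < a_2 < ... < a_n and n = 2k even. Then the permutation (a_1, a_n, a_2, a_{n-1}, ..., a_{k-1}, a_{k+2}, a_k, a_{k+1}) (alternating smallest remaining, largest remaining) has pairwise distinct absolute differences of consecutive terms. -/
/-!
The `i`-th step of the zig-zag walk joins `a (i / 2 + 1)` to `a (n + 1 - (i + 1) / 2)`, so its
length is the gap between these two values. Passing from step `i` to step `i + 1` moves exactly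
one endpoint one place inwards, so for strictly increasing `a` the step lengths strictly decrease.
-/

open Set

def zigzag {α : Type*} (a : ℕ → α) (n j : ℕ) : α :=
  if j % 2 = 1 then a ((j + 1) / 2) else a (n + 1 - j / 2)

section
variable {α : Type*} [AddCommGroup α] [LinearOrder α] [IsOrderedAddMonoid α] {a : ℕ → α} {n : ℕ}

lemma abs_zigzag_succ_sub (ha : MonotoneOn a (Icc 1 n)) {i : ℕ} (hi : i ∈ Icc 1 (n - 1)) :
    |zigzag a n (i + 1) - zigzag a n i| = a (n + 1 - (i + 1) / 2) - a (i / 2 + 1) := by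
  obtain ⟨hi₁, hin⟩ := hi
  unfold zigzag
  rcases Nat.mod_two_eq_zero_or_one i with h | h
  · rw [if_pos (by omega), if_neg (by omega), abs_sub_comm,
      show (i + 1 + 1) / 2 = i / 2 + 1 by omega, show (i + 1) / 2 = i / 2 by omega]
    exact abs_of_nonneg (sub_nonneg.2 (ha ⟨by omega, by omega⟩ ⟨by omega, by omega⟩ (by omega)))
  · rw [if_neg (by omega), if_pos (by omega), show i / 2 + 1 = (i + 1) / 2 by omega]
    exact abs_of_nonneg (sub_nonneg.2 (ha ⟨by omega, by omega⟩ ⟨by omega, by omega⟩ (by omega)))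

lemma strictAntiOn_zigzag_gap (ha : StrictMonoOn a (Icc 1 n)) :
    StrictAntiOn (fun i ↦ a (n + 1 - (i + 1) / 2) - a (i / 2 + 1)) (Icc 1 (n - 1)) := by
  refine strictAntiOn_of_add_one_lt ordConnected_Icc fun i _ hi hi' ↦ ?_
  obtain ⟨hi₁, -⟩ := hi
  obtain ⟨-, hin⟩ := hi'
  rcases Nat.mod_two_eq_zero_or_one i with h | h
  · have hhi : a (n + 1 - (i + 1 + 1) / 2) < a (n + 1 - (i + 1) / 2) :=
      ha ⟨by omega, by omega⟩ ⟨by omega, by omega⟩ (by omega)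
    rw [show i / 2 = (i + 1) / 2 by omega]
    exact sub_lt_sub_right hhi _
  · have hlo : a (i / 2 + 1) < a ((i + 1) / 2 + 1) :=
      ha ⟨by omega, by omega⟩ ⟨by omega, by omega⟩ (by omega)
    rw [show (i + 1 + 1) / 2 = (i + 1) / 2 by omega]
    exact sub_lt_sub_left hlo _

theorem injOn_abs_zigzag_succ_sub (ha : StrictMonoOn a (Icc 1 n)) :
    InjOn (fun i ↦ |zigzag a n (i + 1) - zigzag a n i|) (Icc 1 (n - 1)) := by
  intro i hi j hj h
  simp only [abs_zigzag_succ_sub ha.monotoneOn hi, abs_zigzag_succ_sub ha.monotoneOn hj] at h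
  exact (strictAntiOn_zigzag_gap ha).injOn hi hj h

end

theorem stmt_1_general (n : ℕ) (a : ℕ → ℝ)
    (hmono : ∀ i, 1 ≤ i → i < n → a i < a (i + 1))
    (b : ℕ → ℝ)
    (hb : ∀ j, b j = if j % 2 = 1 then a ((j + 1) / 2) else a (n + 1 - j / 2)) :
    ∀ i ∈ Set.Icc 1 (n - 1), ∀ j ∈ Set.Icc 1 (n - 1),
      |b (i + 1) - b i| = |b (j + 1) - b j| → i = j := by
  have ha : StrictMonoOn a (Icc 1 n) :=
    strictMonoOn_of_lt_add_one ordConnected_Icc fun i _ hi hi' ↦ hmono i hi.1 hi'.2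
  obtain rfl : b = zigzag a n := funext hb
  exact fun i hi j hj ↦ injOn_abs_zigzag_succ_sub ha hi hj

theorem stmt_1 (n k : ℕ) (hk : 1 ≤ k) (hn : n = 2 * k) (a : ℕ → ℝ)
    (hmono : ∀ i, 1 ≤ i → i < n → a i < a (i + 1))
    (b : ℕ → ℝ)
    (hb : ∀ j, b j = if j % 2 = 1 then a ((j + 1) / 2) else a (n + 1 - j / 2)) :
    ∀ i ∈ Set.Icc 1 (n - 1), ∀ j ∈ Set.Icc 1 (n - 1),
      |b (i + 1) - b i| = |b (j + 1) - b j| → i = j :=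
  stmt_1_general n a hmono b hb
end

section
/- Call a permutation a = (a_1,...,a_n) of {1,...,n} good if its n-1 consecutive absolute differences are pairwise distinct and either (i) a_i ≥ ⌈(n+1)/2⌉ for all odd indices i and a_i < ⌈(n+1)/2⌉ for all even indices i, or (ii) a_i ≤ ⌊(n+1)/2⌋ for all odd i and a_i > ⌊(n+1)/2⌋ for all even i. If a is good and satisfies condition (i), then the sequence b with b_i = a_i - ⌊n/2⌋ for odd i and b_i = a_i + ⌊(n+1)/2⌋ for even i is again a good permutation of {1,...,n}, satisfying condition (ii). -/
/-- `a` (restricted to indices `1,…,n`) is a permutation of `{1,…,n}`. -/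
def IsPermOn (n : ℕ) (a : ℕ → ℤ) : Prop :=
  Set.InjOn a (Set.Icc 1 n) ∧ ∀ i ∈ Set.Icc 1 n, a i ∈ Set.Icc (1 : ℤ) (n : ℤ)

/-- The `n-1` consecutive absolute differences of `a` are pairwise distinct. -/
def DistinctDiffs (n : ℕ) (a : ℕ → ℤ) : Prop :=
  ∀ i ∈ Set.Icc 1 (n - 1), ∀ j ∈ Set.Icc 1 (n - 1),
    |a (i + 1) - a i| = |a (j + 1) - a j| → i = j

/-- Condition (i): odd-index terms are `≥ ⌈(n+1)/2⌉`, even-index terms are `< ⌈(n+1)/2⌉`. -/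
def CondI (n : ℕ) (a : ℕ → ℤ) : Prop :=
  (∀ i ∈ Set.Icc 1 n, Odd i → (((n + 2) / 2 : ℕ) : ℤ) ≤ a i) ∧
  (∀ i ∈ Set.Icc 1 n, Even i → a i < (((n + 2) / 2 : ℕ) : ℤ))

/-- Condition (ii): odd-index terms are `≤ ⌊(n+1)/2⌋`, even-index terms are `> ⌊(n+1)/2⌋`. -/
def CondII (n : ℕ) (a : ℕ → ℤ) : Prop :=
  (∀ i ∈ Set.Icc 1 n, Odd i → a i ≤ (((n + 1) / 2 : ℕ) : ℤ)) ∧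
  (∀ i ∈ Set.Icc 1 n, Even i → (((n + 1) / 2 : ℕ) : ℤ) < a i)

/-- A good permutation of `{1,…,n}`. -/
def Good (n : ℕ) (a : ℕ → ℤ) : Prop :=
  IsPermOn n a ∧ DistinctDiffs n a ∧ (CondI n a ∨ CondII n a)

/-! Odd-index entries move down by `⌊n/2⌋` and even-index entries up by `⌈n/2⌉`, so the upper and
lower halves of `{1,…,n}` are exchanged. Consecutive entries lie on opposite sides of the middle,
so each consecutive difference `d` becomes `n - d`, and distinctness is preserved. -/

def halfSwap (n : ℕ) (a : ℕ → ℤ) (i : ℕ) : ℤ :=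
  if Odd i then a i - ((n / 2 : ℕ) : ℤ) else a i + (((n + 1) / 2 : ℕ) : ℤ)

section halfSwap

variable {n : ℕ} {a : ℕ → ℤ} {i : ℕ}

theorem halfSwap_of_odd (hi : Odd i) : halfSwap n a i = a i - ((n / 2 : ℕ) : ℤ) :=
  if_pos hi

theorem halfSwap_of_even (hi : Even i) : halfSwap n a i = a i + (((n + 1) / 2 : ℕ) : ℤ) :=
  if_neg (Nat.not_odd_iff_even.mpr hi)

theorem halfSwap_mem_of_odd (hI : CondI n a) (hi : i ∈ Set.Icc 1 n) (hodd : Odd i)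
    (han : a i ≤ n) : 1 ≤ halfSwap n a i ∧ halfSwap n a i ≤ (((n + 1) / 2 : ℕ) : ℤ) := by
  have hlo := hI.1 i hi hodd
  rw [halfSwap_of_odd hodd]
  omega

theorem halfSwap_mem_of_even (hI : CondI n a) (hi : i ∈ Set.Icc 1 n) (heven : Even i)
    (ha1 : 1 ≤ a i) : (((n + 1) / 2 : ℕ) : ℤ) < halfSwap n a i ∧ halfSwap n a i ≤ n := by
  have hhi := hI.2 i hi heven
  rw [halfSwap_of_even heven]
  omega

theorem condII_halfSwap (hperm : IsPermOn n a) (hI : CondI n a) : CondII n (halfSwap n a) :=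
  ⟨fun i hi hodd => (halfSwap_mem_of_odd hI hi hodd (hperm.2 i hi).2).2,
    fun i hi heven => (halfSwap_mem_of_even hI hi heven (hperm.2 i hi).1).1⟩

theorem isPermOn_halfSwap (hperm : IsPermOn n a) (hI : CondI n a) :
    IsPermOn n (halfSwap n a) := by
  have hodd {i} (hi : i ∈ Set.Icc 1 n) (ho : Odd i) :=
    halfSwap_mem_of_odd hI hi ho (hperm.2 i hi).2
  have heven {i} (hi : i ∈ Set.Icc 1 n) (he : Even i) :=
    halfSwap_mem_of_even hI hi he (hperm.2 i hi).1
  refine ⟨fun i hi j hj hij => ?_, fun i hi => ?_⟩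
  · rcases Nat.even_or_odd i with hi' | hi' <;> rcases Nat.even_or_odd j with hj' | hj'
    · rw [halfSwap_of_even hi', halfSwap_of_even hj', add_left_inj] at hij
      exact hperm.1 hi hj hij
    · have := (heven hi hi').1; have := (hodd hj hj').2; omega
    · have := (hodd hi hi').2; have := (heven hj hj').1; omega
    · rw [halfSwap_of_odd hi', halfSwap_of_odd hj', sub_left_inj] at hij
      exact hperm.1 hi hj hij
  · rcases Nat.even_or_odd i with hi' | hi'
    · have := heven hi hi'; constructor <;> omega
    · have := hodd hi hi'; constructor <;> omega

theorem abs_halfSwap_succ_sub (hperm : IsPermOn n a) (hI : CondI n a)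
    (hi : i ∈ Set.Icc 1 (n - 1)) :
    |halfSwap n a (i + 1) - halfSwap n a i| = n - |a (i + 1) - a i| := by
  obtain ⟨hi1, hin⟩ := hi
  have hmem : i ∈ Set.Icc 1 n := ⟨hi1, by omega⟩
  have hmem' : i + 1 ∈ Set.Icc 1 n := ⟨by omega, by omega⟩
  have hbound := hperm.2 i hmem
  have hbound' := hperm.2 (i + 1) hmem'
  simp only [Set.mem_Icc] at hbound hbound'
  rcases Nat.even_or_odd i with heven | hodd
  · have := hI.2 i hmem heven
    have := hI.1 (i + 1) hmem' heven.add_one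
    rw [halfSwap_of_even heven, halfSwap_of_odd heven.add_one,
      abs_of_nonpos (by omega), abs_of_pos (by omega)]
    omega
  · have := hI.1 i hmem hodd
    have := hI.2 (i + 1) hmem' hodd.add_one
    rw [halfSwap_of_odd hodd, halfSwap_of_even hodd.add_one,
      abs_of_nonneg (by omega), abs_of_neg (by omega)]
    omega

theorem distinctDiffs_halfSwap (hperm : IsPermOn n a) (hdiff : DistinctDiffs n a)
    (hI : CondI n a) : DistinctDiffs n (halfSwap n a) := by
  intro i hi j hj hij
  rw [abs_halfSwap_succ_sub hperm hI hi, abs_halfSwap_succ_sub hperm hI hj, sub_right_inj] at hij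
  exact hdiff i hi j hj hij

end halfSwap

theorem stmt_4 (n : ℕ) (a : ℕ → ℤ) (ha : Good n a) (hI : CondI n a)
    (b : ℕ → ℤ)
    (hb : ∀ i, b i = if Odd i then a i - ((n / 2 : ℕ) : ℤ)
                     else a i + (((n + 1) / 2 : ℕ) : ℤ)) :
    Good n b ∧ CondII n b := by
  obtain ⟨hperm, hdiff, -⟩ := ha
  obtain rfl : b = halfSwap n a := funext hb
  have hII := condII_halfSwap hperm hI
  exact ⟨⟨isPermOn_halfSwap hperm hI, distinctDiffs_halfSwap hperm hdiff hI, .inr hII⟩, hII⟩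
end

section
/- Let a = (a_1,...,a_n) be a good permutation of {1,...,n} satisfying condition (i) (odd-index terms ≥ ⌈(n+1)/2⌉, even-index terms < ⌈(n+1)/2⌉), and define b_i = a_i - ⌊n/2⌋ for odd i and b_i = a_i + ⌊(n+1)/2⌋ for even i. Then for every index 1 ≤ i ≤ n-1, |b_{i+1} - b_i| = n - |a_{i+1} - a_i|. -/
/-!
Between consecutive indices the shift changes the difference by exactly `n`:
`b (i+1) - b i = a (i+1) - a i ∓ n`, with `-` for even `i`. Condition (i) makes
`a (i+1) - a i` positive for even `i` and negative for odd `i`; as `|a (i+1) - a i| < n`,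
the shift flips its sign and leaves absolute value `n - |a (i+1) - a i|`.
-/

theorem IsPermOn.abs_sub_lt {n : ℕ} {a : ℕ → ℤ} (ha : IsPermOn n a) {i j : ℕ}
    (hi : i ∈ Set.Icc 1 n) (hj : j ∈ Set.Icc 1 n) : |a i - a j| < n := by
  obtain ⟨hi₁, hin⟩ := ha.2 i hi
  obtain ⟨hj₁, hjn⟩ := ha.2 j hj
  rw [abs_sub_lt_iff]
  constructor <;> linarith

section CondI

variable {n : ℕ} {a : ℕ → ℤ} {i : ℕ}

theorem CondI.lt_succ_of_even (h : CondI n a) (hi : i ∈ Set.Icc 1 (n - 1)) (he : Even i) :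
    a i < a (i + 1) :=
  (h.2 i ⟨hi.1, by grind⟩ he).trans_le (h.1 (i + 1) ⟨by omega, by grind⟩ he.add_one)

theorem CondI.succ_lt_of_odd (h : CondI n a) (hi : i ∈ Set.Icc 1 (n - 1)) (ho : Odd i) :
    a (i + 1) < a i :=
  (h.2 (i + 1) ⟨by omega, by grind⟩ ho.add_one).trans_le (h.1 i ⟨hi.1, by grind⟩ ho)

end CondI

section Shift

variable {n : ℕ} {a b : ℕ → ℤ} {i : ℕ}
  (hb : ∀ i, b i = if Odd i then a i - ((n / 2 : ℕ) : ℤ) else a i + (((n + 1) / 2 : ℕ) : ℤ))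
include hb

theorem shift_succ_sub_of_even (he : Even i) : b (i + 1) - b i = a (i + 1) - a i - n := by
  rw [hb, hb, if_pos he.add_one, if_neg (Nat.not_odd_iff_even.mpr he)]
  omega

theorem shift_succ_sub_of_odd (ho : Odd i) : b (i + 1) - b i = a (i + 1) - a i + n := by
  rw [hb, hb, if_neg (Nat.not_odd_iff_even.mpr ho.add_one), if_pos ho]
  omega

end Shift

theorem stmt_5 (n : ℕ) (a : ℕ → ℤ) (ha : Good n a) (hI : CondI n a)
    (b : ℕ → ℤ)
    (hb : ∀ i, b i = if Odd i then a i - ((n / 2 : ℕ) : ℤ)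
                     else a i + (((n + 1) / 2 : ℕ) : ℤ)) :
    ∀ i ∈ Set.Icc 1 (n - 1), |b (i + 1) - b i| = (n : ℤ) - |a (i + 1) - a i| := by
  intro i hi
  have hdiff : |a (i + 1) - a i| < n :=
    ha.1.abs_sub_lt ⟨by omega, by grind⟩ ⟨hi.1, by grind⟩
  rcases Nat.even_or_odd i with he | ho
  · have hlt := hI.lt_succ_of_even hi he
    rw [abs_of_pos (sub_pos.mpr hlt)] at hdiff ⊢
    rw [shift_succ_sub_of_even hb he, abs_of_neg (by linarith)]
    ring
  · have hlt := hI.succ_lt_of_odd hi ho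
    rw [abs_of_neg (sub_neg.mpr hlt)] at hdiff ⊢
    rw [shift_succ_sub_of_odd hb ho, abs_of_pos (by linarith)]
    ring
end

section
/- Let A be a set of n distinct reals with additive energy E(A,A) = c·n² for some constant c < 5/2. Then for all sufficiently large n there exists a cyclic arrangement (a_1,...,a_n) of A such that the n cyclic absolute differences |a_2-a_1|, ..., |a_n-a_{n-1}|, |a_1-a_n| are pairwise distinct. -/
/-- The additive energy of a finite set of reals: the number of quadruples
`(a, b, c, d)` with `a + b = c + d`. -/
noncomputable def addEnergy (A : Finset ℝ) : ℕ :=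
  (((A ×ˢ A) ×ˢ (A ×ˢ A)).filter
    (fun p => p.1.1 + p.1.2 = p.2.1 + p.2.2)).card

/-!
Label the vertices of the `n`-cycle by a uniformly random bijection onto `A`. Two gaps on
adjacent edges coincide only on a three-term progression of `A`, and two gaps on disjoint edges
only on a solution of `a - b = ±(c - d)`; both are counted by the nontrivial energy
`E' = E(A, A) - 2n² + n`. Fixing the labels of `k` vertices leaves `(n - k)!` bijections, so a
union bound over pairs of edges leaves at most `n E' (n - 3)! + n (n - 1) E' (n - 4)!` bad
labellings. This is less than `n!` as soon as `2 E' < (n - 1)(n - 3)`, which holds for large `n`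
when `E(A, A) = c n²` with `c < 5 / 2`.
-/

open Finset hiding addEnergy
open Function
open scoped Nat

section CountingEquivs

variable {α β γ : Type*} [Fintype α] [DecidableEq α] [Fintype β] [DecidableEq β] [Fintype γ]

theorem card_perm_fixing_range (ι : γ ↪ α) :
    Fintype.card {τ : Equiv.Perm α // ∀ c, τ (ι c) = ι c} =
      (Fintype.card α - Fintype.card γ)! := by
  classical
  rw [← Fintype.card_congr ((Equiv.Perm.subtypeEquivSubtypePerm (· ∉ Set.range ι)).trans
      (Equiv.subtypeEquivRight (by simp))),
    Fintype.card_perm, Fintype.card_subtype_compl, Set.card_range_of_injective ι.injective]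

theorem card_equiv_comp_eq_le (ι : γ ↪ α) (t : γ → β) :
    #{σ : α ≃ β | ⇑σ ∘ ι = t} ≤ (Fintype.card α - Fintype.card γ)! := by
  obtain ⟨σ₀, hσ₀⟩ | hempty := ({σ : α ≃ β | ⇑σ ∘ ι = t} : Finset _).eq_empty_or_nonempty.symm
  · rw [← card_perm_fixing_range ι, ← Fintype.card_coe]
    refine Fintype.card_le_of_injective (fun σ => ⟨σ.1.trans σ₀.symm, fun c => ?_⟩) ?_
    · have h₁ := congrFun (mem_filter.1 σ.2).2 c
      have h₀ := congrFun (mem_filter.1 hσ₀).2 c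
      simp_all [Equiv.symm_apply_eq]
    · intro σ τ h
      exact Subtype.ext <| Equiv.ext fun a =>
        σ₀.symm.injective (DFunLike.congr_fun (congrArg Subtype.val h) a)
  · simp [hempty]

theorem card_equiv_comp_mem_le (ι : γ ↪ α) (S : Finset (γ → β)) :
    #{σ : α ≃ β | ⇑σ ∘ ι ∈ S} ≤ #S * (Fintype.card α - Fintype.card γ)! := by
  rw [mul_comm]
  refine card_le_mul_card_image_of_maps_to (f := fun σ : α ≃ β => ⇑σ ∘ ι)
    (fun σ hσ => (mem_filter.1 hσ).2) _ fun t _ => ?_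
  refine (card_le_card fun σ hσ => ?_).trans (card_equiv_comp_eq_le ι t)
  simp_all

end CountingEquivs

open Classical in
theorem two_mul_card_not_injective_le {X α δ : Type*} [Fintype X] [Fintype α] [DecidableEq α]
    (f : X → α → δ) :
    2 * #{x | ¬Injective (f x)} ≤ ∑ p ∈ univ.offDiag, #{x | f x p.1 = f x p.2} := by
  let r : X → α × α → Prop := fun x p => f x p.1 = f x p.2
  calc 2 * #{x | ¬Injective (f x)} = ∑ x ∈ {x | ¬Injective (f x)}, 2 := by
        rw [sum_const, smul_eq_mul, mul_comm]
    _ ≤ ∑ x ∈ {x | ¬Injective (f x)}, #(univ.offDiag.bipartiteAbove r x) := by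
      refine sum_le_sum fun x hx => ?_
      obtain ⟨i, j, hfij, hij⟩ := not_injective_iff.1 (mem_filter.1 hx).2
      refine (card_pair (a := (i, j)) (b := (j, i)) (by simp [hij])).symm.le.trans
        (card_le_card ?_)
      simp [insert_subset_iff, r, hij, hij.symm, hfij]
    _ = ∑ p ∈ univ.offDiag, #(bipartiteBelow r {x | ¬Injective (f x)} p) :=
      sum_card_bipartiteAbove_eq_sum_card_bipartiteBelow r
    _ ≤ ∑ p ∈ univ.offDiag, #{x | f x p.1 = f x p.2} :=
      sum_le_sum fun p _ => card_le_card (filter_subset_filter _ (subset_univ _))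

/-- Given `a + b = c + d`, the condition `a ≠ c ∧ a ≠ d` says `{a, b} ≠ {c, d}`. -/
noncomputable def nontrivialEnergy (A : Finset ℝ) : ℕ :=
  #{p ∈ (A ×ˢ A) ×ˢ (A ×ˢ A) | p.1.1 + p.1.2 = p.2.1 + p.2.2 ∧ p.1.1 ≠ p.2.1 ∧ p.1.1 ≠ p.2.2}

theorem addEnergy_add_card (A : Finset ℝ) :
    addEnergy A + #A = nontrivialEnergy A + 2 * #A ^ 2 := by
  set D := (A ×ˢ A).image fun q => (q, q)
  set S := (A ×ˢ A).image fun q => (q, q.swap)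
  have htrivial : {p ∈ (A ×ˢ A) ×ˢ (A ×ˢ A) | p.1.1 + p.1.2 = p.2.1 + p.2.2 ∧
      (p.1.1 = p.2.1 ∨ p.1.1 = p.2.2)} = D ∪ S := by
    ext ⟨⟨a, b⟩, c, d⟩
    simp only [D, S, mem_filter, mem_union, mem_product, mem_image, Prod.ext_iff]
    constructor
    · rintro ⟨h, hs, rfl | rfl⟩
      · exact .inl ⟨(a, b), by grind⟩
      · exact .inr ⟨(a, b), by grind⟩
    · grind
  have hinter : D ∩ S = A.image fun a => ((a, a), (a, a)) := by
    ext ⟨⟨a, b⟩, c, d⟩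
    simp only [D, S, mem_inter, mem_image, mem_product, Prod.exists, Prod.mk.injEq,
      Prod.swap_prod_mk]
    grind
  have hD : #D = #A ^ 2 := by
    rw [card_image_of_injective _ fun _ _ h => congrArg Prod.fst h, card_product, sq]
  have hS : #S = #A ^ 2 := by
    rw [card_image_of_injective _ fun _ _ h => congrArg Prod.fst h, card_product, sq]
  have hDS : #(D ∩ S) = #A := by
    rw [hinter, card_image_of_injective _ fun _ _ h => congrArg (·.1.1) h]
  have hsplit := card_filter_add_card_filter_not
    (s := {p ∈ (A ×ˢ A) ×ˢ (A ×ˢ A) | p.1.1 + p.1.2 = p.2.1 + p.2.2})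
    (fun p => p.1.1 = p.2.1 ∨ p.1.1 = p.2.2)
  simp only [filter_filter, not_or, htrivial] at hsplit
  rw [addEnergy, ← hsplit, nontrivialEnergy]
  simp only [ne_eq]
  have := card_union_add_card_inter D S
  omega

theorem card_threeAP_le_nontrivialEnergy (A : Finset ℝ) :
    #{t : Fin 3 → A | Injective t ∧ |(t 1 : ℝ) - t 0| = |(t 2 : ℝ) - t 1|} ≤
      nontrivialEnergy A := by
  refine card_le_card_of_injOn (fun t => ((t 0, t 2), (t 1, t 1))) (fun t ht => ?_) ?_
  · simp only [coe_filter, mem_univ, true_and, Set.mem_ofPred_eq] at ht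
    obtain ⟨hinj, habs⟩ := ht
    have h01 : (t 0 : ℝ) ≠ t 1 := fun h => by simpa using hinj (Subtype.ext h)
    have h02 : (t 0 : ℝ) ≠ t 2 := fun h => by simpa using hinj (Subtype.ext h)
    simp only [coe_filter, mem_product, Set.mem_ofPred_eq, coe_mem, and_self, true_and]
    refine ⟨?_, h01⟩
    rcases abs_eq_abs.1 habs with h | h
    · linarith
    · exact absurd (by linarith) h02
  · intro t _ t' _ h
    simp only [Prod.mk.injEq] at h
    funext i
    fin_cases i <;> exact Subtype.ext (by simp [h])

theorem card_equal_gaps_le_nontrivialEnergy (A : Finset ℝ) :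
    #{t : Fin 4 → A | Injective t ∧ |(t 1 : ℝ) - t 0| = |(t 3 : ℝ) - t 2|} ≤
      2 * nontrivialEnergy A := by
  rw [two_mul, ← card_filter_add_card_filter_not
    (fun t : Fin 4 → A => (t 1 : ℝ) - t 0 = t 3 - t 2)]
  have hne : ∀ t : Fin 4 → A, Injective t → ∀ i j, i ≠ j → (t i : ℝ) ≠ t j :=
    fun t ht i j hij h => hij (ht (Subtype.ext h))
  gcongr
  · refine card_le_card_of_injOn (fun t => ((t 1, t 2), (t 3, t 0))) (fun t ht => ?_) ?_
    · simp only [coe_filter, mem_filter, mem_univ, true_and, Set.mem_ofPred_eq] at ht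
      obtain ⟨⟨hinj, -⟩, h⟩ := ht
      simp only [coe_filter, mem_product, Set.mem_ofPred_eq, coe_mem, and_self, true_and]
      exact ⟨by linarith, hne t hinj 1 3 (by decide), hne t hinj 1 0 (by decide)⟩
    · intro t _ t' _ h
      simp only [Prod.mk.injEq] at h
      funext i
      fin_cases i <;> exact Subtype.ext (by simp [h])
  · refine card_le_card_of_injOn (fun t => ((t 1, t 3), (t 2, t 0))) (fun t ht => ?_) ?_
    · simp only [coe_filter, mem_filter, mem_univ, true_and, Set.mem_ofPred_eq] at ht
      obtain ⟨⟨hinj, habs⟩, h⟩ := ht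
      simp only [coe_filter, mem_product, Set.mem_ofPred_eq, coe_mem, and_self, true_and]
      refine ⟨?_, hne t hinj 1 2 (by decide), hne t hinj 1 0 (by decide)⟩
      rcases abs_eq_abs.1 habs with h' | h'
      · exact absurd h' h
      · linarith
    · intro t _ t' _ h
      simp only [Prod.mk.injEq] at h
      funext i
      fin_cases i <;> exact Subtype.ext (by simp [h])

theorem card_offDiag_adjacent_le {α : Type*} [Fintype α] [DecidableEq α] (s : Equiv.Perm α) :
    #{p ∈ (univ : Finset α).offDiag | p.2 = s p.1 ∨ p.1 = s p.2} ≤ 2 * Fintype.card α := by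
  calc _ ≤ #((univ.image fun a => (a, s a)) ∪ univ.image fun a => (s a, a)) :=
        card_le_card fun p hp => by
          obtain ⟨a, b⟩ := p
          rcases (mem_filter.1 hp).2 with (rfl : b = s a) | (rfl : a = s b) <;> simp
    _ ≤ _ := (card_union_le _ _).trans (by grw [card_image_le, card_image_le, card_univ]; omega)

def gap {α : Type*} {A : Finset ℝ} (s : Equiv.Perm α) (σ : α ≃ A) (a : α) : ℝ :=
  |(σ (s a) : ℝ) - σ a|

namespace gap

variable {α : Type*} [Fintype α] [DecidableEq α] {A : Finset ℝ} {s : Equiv.Perm α}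

theorem card_eq_succ_le (h₁ : ∀ a, s a ≠ a) (h₂ : ∀ a, s (s a) ≠ a) (i : α) :
    #{σ : α ≃ A | gap s σ i = gap s σ (s i)} ≤ nontrivialEnergy A * (Fintype.card α - 3)! := by
  let ι : Fin 3 ↪ α := ⟨![i, s i, s (s i)], fun a b h => by
    fin_cases a <;> fin_cases b <;> simp_all [(h₁ _).symm, (h₂ _).symm]⟩
  calc _ ≤ #{σ : α ≃ A | ⇑σ ∘ ι ∈
        ({t | Injective t ∧ |(t 1 : ℝ) - t 0| = |(t 2 : ℝ) - t 1|} : Finset (Fin 3 → A))} :=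
        card_le_card fun σ hσ => by
          simp only [mem_filter, mem_univ, true_and]
          exact ⟨σ.injective.comp ι.injective, (mem_filter.1 hσ).2⟩
    _ ≤ _ := by
      grw [card_equiv_comp_mem_le, card_threeAP_le_nontrivialEnergy, Fintype.card_fin]

theorem card_eq_le (h₁ : ∀ a, s a ≠ a) {i j : α} (hij : i ≠ j) (hj : j ≠ s i) (hi : i ≠ s j) :
    #{σ : α ≃ A | gap s σ i = gap s σ j} ≤ 2 * nontrivialEnergy A * (Fintype.card α - 4)! := by
  let ι : Fin 4 ↪ α := ⟨![i, s i, j, s j], fun a b h => by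
    fin_cases a <;> fin_cases b <;> simp_all [(h₁ _).symm, eq_comm]⟩
  calc _ ≤ #{σ : α ≃ A | ⇑σ ∘ ι ∈
        ({t | Injective t ∧ |(t 1 : ℝ) - t 0| = |(t 3 : ℝ) - t 2|} : Finset (Fin 4 → A))} :=
        card_le_card fun σ hσ => by
          simp only [mem_filter, mem_univ, true_and]
          exact ⟨σ.injective.comp ι.injective, (mem_filter.1 hσ).2⟩
    _ ≤ _ := by
      grw [card_equiv_comp_mem_le, card_equal_gaps_le_nontrivialEnergy, Fintype.card_fin]

theorem sum_card_eq_le (h₁ : ∀ a, s a ≠ a) (h₂ : ∀ a, s (s a) ≠ a) :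
    ∑ p ∈ univ.offDiag, #{σ : α ≃ A | gap s σ p.1 = gap s σ p.2} ≤
      2 * Fintype.card α * (nontrivialEnergy A * (Fintype.card α - 3)!) +
        Fintype.card α * (Fintype.card α - 1) *
          (2 * nontrivialEnergy A * (Fintype.card α - 4)!) := by
  rw [← sum_filter_add_sum_filter_not _ fun p : α × α => p.2 = s p.1 ∨ p.1 = s p.2]
  gcongr ?_ + ?_
  · refine (sum_le_card_nsmul _ _ (nontrivialEnergy A * (Fintype.card α - 3)!)
      fun p hp => ?_).trans ?_
    · obtain ⟨i, j⟩ := p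
      rcases (mem_filter.1 hp).2 with (rfl : j = s i) | (rfl : i = s j)
      · exact card_eq_succ_le h₁ h₂ i
      · simpa only [eq_comm] using card_eq_succ_le (A := A) h₁ h₂ j
    · grw [smul_eq_mul, card_offDiag_adjacent_le]
  · refine (sum_le_card_nsmul _ _ (2 * nontrivialEnergy A * (Fintype.card α - 4)!)
      fun p hp => ?_).trans ?_
    · obtain ⟨i, j⟩ := p
      simp only [mem_filter, mem_offDiag, not_or] at hp
      exact card_eq_le h₁ hp.1.2.2 hp.2.1 hp.2.2
    · grw [smul_eq_mul, filter_subset _ _, offDiag_card, card_univ, Nat.mul_sub_one]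

open Classical in
theorem exists_injective (h₁ : ∀ a, s a ≠ a) (h₂ : ∀ a, s (s a) ≠ a)
    (hcard : Fintype.card α = #A)
    (hE : 2 * nontrivialEnergy A < (Fintype.card α - 1) * (Fintype.card α - 3)) :
    ∃ σ : α ≃ A, Injective (gap s σ) := by
  by_contra! hbad
  have hcount := (two_mul_card_not_injective_le (gap s)).trans (sum_card_eq_le (A := A) h₁ h₂)
  rw [filter_true_of_mem fun σ _ => hbad σ, card_univ,
    Fintype.card_equiv (Fintype.equivOfCardEq (by simpa using hcard))] at hcount
  obtain ⟨m, hm⟩ : ∃ m, Fintype.card α = m + 4 := by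
    refine ⟨Fintype.card α - 4, by_contra fun h => ?_⟩
    simp [show Fintype.card α - 3 = 0 by omega] at hE
  rw [hm, show m + 4 - 1 = m + 3 by omega, show m + 4 - 3 = m + 1 by omega] at hE hcount
  simp only [Nat.add_sub_cancel, Nat.factorial_succ] at hcount
  -- `hcount` is `(m + 3) (m + 1) ≤ 2 E'` multiplied by `2 (m + 4) (m + 2) m!`.
  have hK : 0 < 2 * (m + 4) * (m + 2) * m ! := by positivity
  nlinarith [Nat.mul_lt_mul_of_pos_left hE hK]

end gap

theorem finRotate_apply_ne {n : ℕ} (hn : 2 ≤ n) (i : Fin n) : finRotate n i ≠ i :=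
  Equiv.Perm.mem_support.1 (by simp [support_finRotate_of_le hn])

theorem finRotate_finRotate_apply_ne {n : ℕ} (hn : 3 ≤ n) (i : Fin n) :
    finRotate n (finRotate n i) ≠ i := by
  obtain ⟨m, rfl⟩ : ∃ m, n = m + 3 := ⟨n - 3, by omega⟩
  rw [finRotate_apply, finRotate_apply, add_assoc, Ne, add_eq_left, Fin.ext_iff]
  simp [Fin.val_add, Nat.mod_eq_of_lt (show 2 < m + 3 by omega)]

theorem stmt_16 (c : ℝ) (hc : c < 5 / 2) :
    ∃ N : ℕ, ∀ n ≥ N, ∀ A : Finset ℝ, A.card = n →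
      (addEnergy A : ℝ) = c * (n : ℝ) ^ 2 →
      ∃ σ : Fin n ≃ {x // x ∈ A},
        Function.Injective
          (fun i : Fin n => |(σ (finRotate n i) : ℝ) - (σ i : ℝ)|) := by
  refine ⟨⌈6 / (5 - 2 * c)⌉₊ + 3, fun n hn A hA hE => ?_⟩
  obtain ⟨m, rfl⟩ : ∃ m, n = m + 3 := ⟨n - 3, by omega⟩
  refine gap.exists_injective (finRotate_apply_ne (by omega))
    (finRotate_finRotate_apply_ne (by omega)) (by simp [hA]) ?_
  have hN : 6 ≤ (5 - 2 * c) * (m + 3) := by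
    have := (Nat.le_ceil (6 / (5 - 2 * c))).trans (Nat.cast_le.2 (show _ ≤ m + 3 by omega))
    rw [div_le_iff₀ (by linarith)] at this
    push_cast at this
    linarith
  have henergy : (addEnergy A : ℝ) + (m + 3) = nontrivialEnergy A + 2 * (m + 3) ^ 2 := by
    exact_mod_cast hA ▸ addEnergy_add_card A
  simp only [Fintype.card_fin, show m + 3 - 1 = m + 2 by omega, Nat.add_sub_cancel]
  have : (2 * nontrivialEnergy A : ℝ) < (m + 2) * m := by
    push_cast at hE
    nlinarith
  exact_mod_cast this
end
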